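/- If D ⊆ ℕ is bounded truth-table reducible to K, then there exists a natural number n such that D is weakly n-c.e. -/

import Mathlib

/-- Codes for oracle Turing machines (partial recursive functions relative to an oracle). -/
inductive OCode : Type
  | zero : OCode
  | succ : OCode
  | left : OCode
  | right : OCode
  | oracle : OCode
  | pair : OCode → OCode → OCode
  | comp : OCode → OCode → OCode
  | prec : OCode → OCode → OCode
  | rfind' : OCode → OCode

namespace OCode

/-- A standard enumeration of oracle machine codes. -/
def ofNat : ℕ → OCode
  | 0 => zero
  | 1 => succ
  | 2 => left
  | 3 => right
  | 4 => oracle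
  | n + 5 =>
    let m := n.div2.div2
    have hm : m < n + 5 := by
      simp only [m, Nat.div2_val]
      exact
        lt_of_le_of_lt (le_trans (Nat.div_le_self _ _) (Nat.div_le_self _ _))
          (Nat.lt_succ_of_le (Nat.le_add_right _ _))
    have _m1 : m.unpair.1 < n + 5 := lt_of_le_of_lt m.unpair_left_le hm
    have _m2 : m.unpair.2 < n + 5 := lt_of_le_of_lt m.unpair_right_le hm
    match n.bodd, n.div2.bodd with
    | false, false => pair (ofNat m.unpair.1) (ofNat m.unpair.2)
    | false, true  => comp (ofNat m.unpair.1) (ofNat m.unpair.2)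
    | true , false => prec (ofNat m.unpair.1) (ofNat m.unpair.2)
    | true , true  => rfind' (ofNat m)
  decreasing_by
    all_goals
      first
      | exact Nat.le_of_lt_succ _m1
      | exact Nat.le_of_lt_succ _m2
      | exact Nat.le_of_lt_succ hm
      | exact _m1
      | exact _m2
      | exact hm

/-- Evaluation of an oracle machine code relative to an oracle `g`. -/
def eval (g : ℕ →. ℕ) : OCode → ℕ →. ℕ
  | zero => pure 0
  | succ => Nat.succ
  | left => ↑fun n : ℕ => n.unpair.1
  | right => ↑fun n : ℕ => n.unpair.2
  | oracle => g
  | pair cf cg => fun n => Nat.pair <$> eval g cf n <*> eval g cg n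
  | comp cf cg => fun n => eval g cg n >>= eval g cf
  | prec cf cg =>
    Nat.unpaired fun a n =>
      n.rec (eval g cf a) fun y IH => do
        let i ← IH
        eval g cg (Nat.pair a (Nat.pair y i))
  | rfind' cf =>
    Nat.unpaired fun a m =>
      (Nat.rfind fun n => (fun m => m = 0) <$> eval g cf (Nat.pair a (n + m))).map (· + m)

end OCode

open Classical in
/-- The characteristic function of a set of naturals, as a `{0,1}`-valued function. -/
noncomputable def chi (A : Set ℕ) : ℕ → ℕ := fun n => if n ∈ A then 1 else 0

/-- The characteristic function of `A`, as a (total) partial function, used as an oracle. -/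
noncomputable def charFun (A : Set ℕ) : ℕ →. ℕ := fun n => Part.some (chi A n)

/-- `A` is Turing reducible to `B`: some oracle machine with oracle (the characteristic
function of) `B` computes the characteristic function of `A`. -/
def TuringRed (A B : Set ℕ) : Prop :=
  ∃ c : OCode, ∀ n, OCode.eval (charFun B) c n = Part.some (chi A n)

/-- The Turing jump of `A` : the halting problem relative to `A`. -/
def jump (A : Set ℕ) : Set ℕ :=
  {e | (OCode.eval (charFun A) (OCode.ofNat e) e).Dom}

/-- The halting set `K = {e : Mₑ(e) halts}`. -/
def Kset : Set ℕ := {e | ((Denumerable.ofNat Nat.Partrec.Code e).eval e).Dom}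

/-- The `e`-th computably enumerable set `Wₑ`, the domain of the `e`-th machine. -/
def Wenum (e : ℕ) : Set ℕ := {x | ((Denumerable.ofNat Nat.Partrec.Code e).eval x).Dom}

/-- A set of naturals is computably enumerable. -/
def CEset (A : Set ℕ) : Prop := ∃ c : Nat.Partrec.Code, A = {x | (c.eval x).Dom}

open Classical in
/-- The list of oracle answers of `B` to a list of queries. -/
noncomputable def answers (B : Set ℕ) (qs : List ℕ) : List Bool :=
  qs.map fun q => decide (q ∈ B)

/-- Truth-table reducibility: a total computable reduction, given by a computable function
producing the queries and a total computable function evaluating the truth table on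
the vector of oracle answers. -/
def TTRed (A B : Set ℕ) : Prop :=
  ∃ f : ℕ → List ℕ, ∃ g : ℕ → List Bool → Bool,
    Computable f ∧ Computable₂ g ∧ ∀ x, x ∈ A ↔ g x (answers B (f x)) = true

/-- Bounded truth-table reducibility: truth-table reducibility with a constant bound
on the number of queries. -/
def BTTRed (A B : Set ℕ) : Prop :=
  ∃ f : ℕ → List ℕ, ∃ g : ℕ → List Bool → Bool, ∃ k : ℕ,
    Computable f ∧ Computable₂ g ∧ (∀ x, (f x).length ≤ k) ∧
    ∀ x, x ∈ A ↔ g x (answers B (f x)) = true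

/-- A set is immune if it is infinite but has no infinite c.e. subset. -/
def Immune (C : Set ℕ) : Prop :=
  C.Infinite ∧ ∀ W : Set ℕ, CEset W → W ⊆ C → W.Finite

/-- A set is bi-immune if both it and its complement are immune. -/
def BiImmune (C : Set ℕ) : Prop := Immune C ∧ Immune Cᶜ

/-- The principal function of `B`: `pfun B x` is the `x`-th element of `B` in increasing order. -/
noncomputable def pfun (B : Set ℕ) : ℕ → ℕ := Nat.nth (· ∈ B)

/-- A set is hyperimmune if it is infinite and its principal function is not majorized
by any computable function. -/
def Hyperimmune (B : Set ℕ) : Prop :=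
  B.Infinite ∧ ∀ g : ℕ → ℕ, Computable g → ¬ ∀ x, pfun B x < g x

/-- `D` is weakly `n`-c.e.: some computable approximation `h` converges to the
characteristic function of `D` with at most `n` mind changes on each argument. -/
def WeaklyNCE (n : ℕ) (D : Set ℕ) : Prop :=
  ∃ h : ℕ → ℕ → ℕ, Computable₂ h ∧ ∀ x,
    (∀ᶠ s in Filter.atTop, h x s = chi D x) ∧
    {s | h x s ≠ h x (s + 1)}.Finite ∧ {s | h x s ≠ h x (s + 1)}.ncard ≤ n

/-- `f` is in `EN m`: there are `m` partial computable functions such that on every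
input at least one of them converges to the correct value of `f`. -/
def EN {α β : Type} [Primcodable α] [Primcodable β] (m : ℕ) (f : α → β) : Prop :=
  ∃ F : Fin m → α →. β, (∀ i, Partrec (F i)) ∧ ∀ x, ∃ i, f x ∈ F i x

/-- The counting function `#ₙ^A`: the number of distinct elements among the inputs
that belong to `A`. -/
noncomputable def cardFn (A : Set ℕ) (n : ℕ) (v : List.Vector ℕ n) : ℕ :=
  ({x | x ∈ v.toList} ∩ A).ncard

open Classical in
/-- The `n`-fold characteristic function `χₙ^A`. -/
noncomputable def chiVec (A : Set ℕ) (n : ℕ) (v : List.Vector ℕ n) : List.Vector Bool n :=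
  v.map fun x => decide (x ∈ A)

/-!
`K` is c.e., so its stage-`s` approximations `Kₛ` change each bit at most once, from `false`
to `true`. Evaluating a btt-reduction of `D` to `K` with at most `k` queries on the answers of
`Kₛ` gives an approximation of `D(x)` that converges, and that can change only at a stage where
one of the `k` queried bits changes, hence at most `k` times. The same argument turns a weakly
`m`-c.e. oracle into a weakly `k m`-c.e. set.
-/

open Filter Nat.Partrec

def mindChanges {β : Type*} (u : ℕ → β) : Set ℕ := {s | u s ≠ u (s + 1)}

section MindChanges

variable {α β γ : Type*}

theorem mindChanges_comp_encard_le (F : β → γ) {u : ℕ → β} {m : ℕ∞}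
    (hu : (mindChanges u).encard ≤ m) : (mindChanges fun s => F (u s)).encard ≤ m :=
  (Set.encard_le_encard fun s (hs : F (u s) ≠ F (u (s + 1))) h => hs (congrArg F h)).trans hu

theorem Monotone.mindChanges_encard_le_one {u : ℕ → Bool} (hu : Monotone u) :
    (mindChanges u).encard ≤ 1 := by
  have jump : ∀ s ∈ mindChanges u, u s = false ∧ u (s + 1) = true := fun s hs => by
    have hle := hu s.le_succ
    revert hs hle
    simp only [mindChanges, Set.mem_ofPred_eq]
    cases u s <;> cases u (s + 1) <;> decide
  refine Set.encard_le_one_iff.2 fun s t hs ht => ?_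
  by_contra hne
  wlog hst : s < t generalizing s t
  · exact this t s ht hs (Ne.symm hne) (lt_of_le_of_ne (not_lt.1 hst) (Ne.symm hne))
  have := hu (Nat.succ_le_of_lt hst)
  rw [(jump s hs).2, (jump t ht).1] at this
  exact absurd this (by decide)

theorem mindChanges_listMap_encard_le (l : List α) {u : α → ℕ → β} {m : ℕ∞}
    (hu : ∀ a ∈ l, (mindChanges (u a)).encard ≤ m) :
    (mindChanges fun s => l.map (u · s)).encard ≤ l.length * m := by
  induction l with
  | nil => simp [mindChanges]
  | cons a l ih =>
    have hsub : (mindChanges fun s => (a :: l).map (u · s)) ⊆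
        mindChanges (u a) ∪ mindChanges fun s => l.map (u · s) := fun s hs => by
      by_contra h
      simp only [mindChanges, Set.mem_union, Set.mem_ofPred_eq, not_or, not_not] at h
      exact hs (by simp [h.1, h.2])
    calc _ ≤ _ := Set.encard_le_encard hsub
      _ ≤ m + l.length * m :=
        (Set.encard_union_le _ _).trans (add_le_add (hu a (by simp)) (ih fun b hb => hu b (by simp [hb])))
      _ = (a :: l).length * m := by push_cast [List.length_cons]; ring

end MindChanges

theorem List.eventually_map_eq_map {α β ι : Type*} {F : Filter ι} (l : List α) {u : α → ι → β}
    {v : α → β} (h : ∀ a ∈ l, ∀ᶠ s in F, u a s = v a) :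
    ∀ᶠ s in F, l.map (u · s) = l.map v :=
  ((Filter.eventually_all_finite l.finite_toSet).2 h).mono fun _ hs => List.map_congr_left hs

theorem chi_eq_cond {A : Set ℕ} {x : ℕ} {b : Bool} (h : x ∈ A ↔ b = true) :
    chi A x = cond b 1 0 := by
  cases b <;> simp_all [chi]

theorem answers_eq_map_chi (B : Set ℕ) (l : List ℕ) :
    answers B l = l.map fun q => decide (chi B q = 1) :=
  List.map_congr_left fun q _ => by by_cases hq : q ∈ B <;> simp [chi, hq]

theorem weaklyNCE_iff_encard {n : ℕ} {D : Set ℕ} :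
    WeaklyNCE n D ↔ ∃ h : ℕ → ℕ → ℕ, Computable₂ h ∧ ∀ x,
      (∀ᶠ s in atTop, h x s = chi D x) ∧ (mindChanges (h x)).encard ≤ n := by
  simp only [WeaklyNCE, Set.encard_le_coe_iff_finite_ncard_le, mindChanges]

namespace Nat.Partrec.Code

theorem monotone_isSome_evaln (c : Code) (x : ℕ) : Monotone fun s => (c.evaln s x).isSome := by
  intro s t hst
  cases hs : c.evaln s x with
  | none => simp [hs]
  | some a => simp [Option.mem_def.1 (evaln_mono hst hs)]

theorem exists_isSome_evaln_iff (c : Code) (x : ℕ) : (∃ s, (c.evaln s x).isSome) ↔ (c.eval x).Dom := by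
  simp only [Option.isSome_iff_exists, Part.dom_iff_mem, evaln_complete, ← Option.mem_def]
  exact exists_comm

end Nat.Partrec.Code

theorem CEset.weaklyNCE_one {A : Set ℕ} (hA : CEset A) : WeaklyNCE 1 A := by
  obtain ⟨c, rfl⟩ := hA
  refine weaklyNCE_iff_encard.2 ⟨fun x s => cond (c.evaln s x).isSome 1 0, ?_, fun x => ⟨?_, ?_⟩⟩
  · exact (Primrec.cond (Primrec.option_isSome.comp (Code.primrec_evaln.comp
      ((Primrec.snd.pair (Primrec.const c)).pair Primrec.fst))) (Primrec.const 1)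
      (Primrec.const 0)).to_comp.to₂
  · by_cases hx : (c.eval x).Dom
    · obtain ⟨s₀, hs₀⟩ := (Code.exists_isSome_evaln_iff c x).2 hx
      filter_upwards [eventually_ge_atTop s₀] with s hs
      have hs : (c.evaln s x).isSome := Bool.le_iff_imp.1 (Code.monotone_isSome_evaln c x hs) hs₀
      simp [hs, chi, hx]
    · refine Eventually.of_forall fun s => ?_
      have : (c.evaln s x).isSome = false := by
        simpa using fun h => hx ((Code.exists_isSome_evaln_iff c x).1 ⟨s, h⟩)
      simp [this, chi, hx]
  · exact_mod_cast mindChanges_comp_encard_le (fun b => cond b 1 0)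
      (Code.monotone_isSome_evaln c x).mindChanges_encard_le_one

theorem ceSet_Kset : CEset Kset := by
  obtain ⟨c, hc⟩ := Code.exists_code.1
    (Partrec.nat_iff.1 (Code.eval_part.comp (Computable.ofNat Code) Computable.id))
  exact ⟨c, by simp [Kset, hc]⟩

theorem Computable.list_map {α β σ : Type*} [Primcodable α] [Primcodable β] [Primcodable σ]
    {f : α → List β} {g : α → β → σ} (hf : Computable f) (hg : Computable₂ g) :
    Computable fun a => (f a).map (g a) := by
  -- recursion on the length, appending the image of the `n`-th entry at step `n`
  have hrec : Computable fun a => Nat.rec (motive := fun _ => List σ) []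
      (fun n acc => Option.casesOn (f a)[n]? acc fun b => acc ++ [g a b]) (f a).length :=
    Computable.nat_rec (Computable.list_length.comp hf) (Computable.const [])
      (Computable.option_casesOn
        (Computable.list_getElem?.comp (hf.comp Computable.fst) (Computable.fst.comp Computable.snd))
        (Computable.snd.comp Computable.snd)
        (Computable.list_concat.comp (Computable.snd.comp (Computable.snd.comp Computable.fst))
          (hg.comp (Computable.fst.comp Computable.fst) Computable.snd)).to₂).to₂
  refine hrec.of_eq fun a => ?_
  suffices ∀ n, Nat.rec (motive := fun _ => List σ) []
      (fun n acc => Option.casesOn (f a)[n]? acc fun b => acc ++ [g a b]) n =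
      ((f a).take n).map (g a) by rw [this, List.take_length]
  intro n
  induction n with
  | zero => rfl
  | succ n ih => rw [List.take_add_one]; cases h : (f a)[n]? <;> simp [ih, h]

theorem WeaklyNCE.exists_of_bttRed {m : ℕ} {A B : Set ℕ} (hB : WeaklyNCE m B)
    (hAB : BTTRed A B) : ∃ k, WeaklyNCE (k * m) A := by
  obtain ⟨f, g, k, hf, hg, hlen, hAB⟩ := hAB
  obtain ⟨h, hh, hconv⟩ := weaklyNCE_iff_encard.1 hB
  let ans : ℕ → ℕ → List Bool := fun x s => (f x).map fun q => decide (h q s = 1)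
  have hans : Computable₂ ans :=
    (Computable.list_map (hf.comp Computable.fst) (Primrec.eq.decide.to_comp.comp
      (hh.comp Computable.snd (Computable.snd.comp Computable.fst)) (Computable.const 1)).to₂).to₂
  refine ⟨k, weaklyNCE_iff_encard.2 ⟨fun x s => cond (g x (ans x s)) 1 0, ?_, fun x => ⟨?_, ?_⟩⟩⟩
  · exact (Computable.cond (hg.comp Computable.fst hans) (Computable.const 1)
      (Computable.const 0)).to₂
  · have hlim : ∀ᶠ s in atTop, ans x s = answers B (f x) := by
      rw [answers_eq_map_chi]
      exact (f x).eventually_map_eq_map fun q _ =>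
        (hconv q).1.mono fun s hs => by rw [hs]
    filter_upwards [hlim] with s hs
    rw [hs, chi_eq_cond (hAB x)]
  · refine mindChanges_comp_encard_le (fun l => cond (g x l) 1 0)
      ((mindChanges_listMap_encard_le (f x) fun q _ =>
        mindChanges_comp_encard_le (fun n => decide (n = 1)) (hconv q).2).trans ?_)
    push_cast
    exact mul_le_mul_left (by exact_mod_cast hlen x) _

/-- If `D ≤_btt K` then `D` is weakly `n`-c.e. for some `n`. -/
theorem weaklyNCE_of_btt_K (D : Set ℕ) (hD : BTTRed D Kset) :
    ∃ n : ℕ, WeaklyNCE n D :=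
  let ⟨k, hk⟩ := ceSet_Kset.weaklyNCE_one.exists_of_bttRed hD
  ⟨k * 1, hk⟩
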